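/- Let G be a finite undirected weighted graph without loops, and let a, b : V(G) → ℝ≥0 satisfy d_G(x) ≥ a(x) + b(x) + 2·W_G(x) for every vertex x ∈ V(G). Suppose there is no meager partition of V(G), i.e. no partition (A, B) of V(G) such that the induced subgraph G(A) is a-meager and G(B) is b-meager. Then there exists a stable partition of V(G): a partition (A', B') with d_{A'}(x) ≥ a(x) for every x ∈ A' and d_{B'}(x) ≥ b(x) for every x ∈ B'. -/

import Mathlib

/-!
Call `X` `f`-strong if `d_X(x) ≥ f(x) + W_G(x)` for all `x ∈ X`; `G(X)` is `f`-meager iff no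
nonempty subset of `X` is `f`-strong, and deleting one vertex from an `f`-strong set leaves an
`f`-stable one. Take a minimal `a`-strong set `S` and `s ∈ S`. If `S = {s}`, then `S` and
`V ∖ {s}` are disjoint stable seeds. Otherwise `S ∖ {s}` is `a`-meager, so its complement is
not `b`-meager and contains a `b`-strong set `T`; the seeds are `S ∖ {s}` and `T`.

Among the partitions `(A, Aᶜ)` with `S ⊆ A` and `T ⊆ Aᶜ`, one minimizing
`w(A, Aᶜ) + Σ_A a + Σ_{Aᶜ} b` is stable: since `d_G ≥ a + b`, moving a vertex that violates
its condition to the other side would lower this cost.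
-/

/-- Degree of vertex `x` with respect to the vertex subset `X`:
the sum of weights of edges from `x` to vertices of `X`. -/
def deg {V : Type*} (w : V → V → ℝ) (X : Finset V) (x : V) : ℝ :=
  ∑ y ∈ X, w x y

/-- `maxW w x` is the maximum weight of an edge of the graph incident to `x`,
loops excluded, i.e. the maximum of `w x y` over all `y ≠ x`. -/
noncomputable def maxW {V : Type*} [Fintype V] [DecidableEq V] [Nontrivial V]
    (w : V → V → ℝ) (x : V) : ℝ :=
  (Finset.univ.erase x).sup'
    (by obtain ⟨y, hy⟩ := exists_ne x
        exact ⟨y, Finset.mem_erase.mpr ⟨hy, Finset.mem_univ y⟩⟩)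
    (w x)

/-- The induced subgraph `G(X)` is `f`-meager if every nonempty `H ⊆ X`
contains a vertex `x` with `d_H(x) < f(x) + W_G(x)`. -/
def Meager {V : Type*} [Fintype V] [DecidableEq V] [Nontrivial V]
    (w : V → V → ℝ) (f : V → ℝ) (X : Finset V) : Prop :=
  ∀ H ⊆ X, H.Nonempty → ∃ x ∈ H, deg w H x < f x + maxW w x

section Degree

variable {V : Type*} (w : V → V → ℝ)

lemma deg_mono (hnonneg : ∀ x y, 0 ≤ w x y) {X Y : Finset V} (h : X ⊆ Y) (x : V) :
    deg w X x ≤ deg w Y x :=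
  Finset.sum_le_sum_of_subset_of_nonneg h fun y _ _ => hnonneg x y

variable [DecidableEq V]

lemma deg_erase {X : Finset V} {v : V} (h : v ∈ X) (x : V) :
    deg w (X.erase v) x = deg w X x - w x v :=
  Finset.sum_erase_eq_sub h

lemma deg_erase_self (hloop : ∀ x, w x x = 0) (X : Finset V) (x : V) :
    deg w (X.erase x) x = deg w X x :=
  Finset.sum_erase X (hloop x)

lemma deg_add_deg_compl [Fintype V] (X : Finset V) (x : V) :
    deg w X x + deg w Xᶜ x = deg w Finset.univ x :=
  Finset.sum_add_sum_compl X (w x)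

end Degree

section Potential

variable {V : Type*} [Fintype V] [DecidableEq V] (w : V → V → ℝ)

def IsStable (f : V → ℝ) (X : Finset V) : Prop :=
  ∀ x ∈ X, f x ≤ deg w X x

def cutWeight (A : Finset V) : ℝ :=
  ∑ p ∈ A, deg w Aᶜ p

def partitionCost (a b : V → ℝ) (A : Finset V) : ℝ :=
  cutWeight w A + ∑ p ∈ A, a p + ∑ p ∈ Aᶜ, b p

variable {w}

lemma cutWeight_compl (hsymm : ∀ x y, w x y = w y x) (A : Finset V) :
    cutWeight w Aᶜ = cutWeight w A := by
  simp only [cutWeight, deg, compl_compl]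
  rw [Finset.sum_comm]
  exact Finset.sum_congr rfl fun p _ => Finset.sum_congr rfl fun q _ => hsymm q p

lemma cutWeight_erase (hsymm : ∀ x y, w x y = w y x) (hloop : ∀ x, w x x = 0)
    {A : Finset V} {x : V} (hx : x ∈ A) :
    cutWeight w A = cutWeight w (A.erase x) + deg w Aᶜ x - deg w A x := by
  have hxc : x ∉ Aᶜ := Finset.notMem_compl.mpr hx
  have hdeg_erase : ∀ p, deg w (A.erase x)ᶜ p = w p x + deg w Aᶜ p := fun p => by
    rw [Finset.compl_erase, deg, Finset.sum_insert hxc]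
    rfl
  have hdeg_self : ∑ p ∈ A.erase x, w p x = deg w A x := by
    rw [← deg_erase_self w hloop]
    exact Finset.sum_congr rfl fun p _ => hsymm p x
  rw [cutWeight, cutWeight, Finset.sum_congr rfl fun p _ => hdeg_erase p,
    Finset.sum_add_distrib, hdeg_self, Finset.sum_erase_eq_sub hx]
  ring

lemma partitionCost_compl (hsymm : ∀ x y, w x y = w y x) (a b : V → ℝ) (A : Finset V) :
    partitionCost w b a Aᶜ = partitionCost w a b A := by
  rw [partitionCost, partitionCost, cutWeight_compl hsymm, compl_compl]
  ring

lemma partitionCost_erase (hsymm : ∀ x y, w x y = w y x) (hloop : ∀ x, w x x = 0)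
    (a b : V → ℝ) {A : Finset V} {x : V} (hx : x ∈ A) :
    partitionCost w a b A =
      partitionCost w a b (A.erase x) + deg w Aᶜ x - deg w A x + a x - b x := by
  simp only [partitionCost, cutWeight_erase hsymm hloop hx, Finset.compl_erase,
    Finset.sum_insert (Finset.notMem_compl.mpr hx), Finset.sum_erase_eq_sub hx]
  ring

/-- Moving a vertex `x` with `d_A(x) < a(x)` out of `A` lowers the cost by
`d_G(x) - 2 d_A(x) + a(x) - b(x) ≥ 2 (a(x) - d_A(x)) > 0`. -/
lemma IsMinOn.isStable_partitionCost (hsymm : ∀ x y, w x y = w y x)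
    (hnonneg : ∀ x y, 0 ≤ w x y) (hloop : ∀ x, w x x = 0) {a b : V → ℝ}
    (hdeg : ∀ x, a x + b x ≤ deg w Finset.univ x) {S T A : Finset V}
    (hS : IsStable w a S) (hA : IsMinOn (partitionCost w a b) {B | S ⊆ B ∧ Disjoint B T} A)
    (hSA : S ⊆ A) (hAT : Disjoint A T) : IsStable w a A := by
  intro x hx
  by_contra! hlt
  have hxS : x ∉ S := fun h => hlt.not_ge ((hS x h).trans (deg_mono w hnonneg hSA x))
  have hmin : partitionCost w a b A ≤ partitionCost w a b (A.erase x) :=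
    hA ⟨Finset.subset_erase.mpr ⟨hSA, hxS⟩, hAT.mono_left (Finset.erase_subset x A)⟩
  rw [partitionCost_erase hsymm hloop a b hx] at hmin
  linarith [hdeg x, deg_add_deg_compl w A x]

lemma IsMinOn.partitionCost_compl (hsymm : ∀ x y, w x y = w y x) {a b : V → ℝ}
    {S T A : Finset V} (hA : IsMinOn (partitionCost w a b) {B | S ⊆ B ∧ Disjoint B T} A) :
    IsMinOn (partitionCost w b a) {B | T ⊆ B ∧ Disjoint B S} Aᶜ := by
  refine isMinOn_iff.mpr fun B ⟨hTB, hBS⟩ => ?_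
  rw [_root_.partitionCost_compl hsymm, ← compl_compl B, _root_.partitionCost_compl hsymm]
  exact hA ⟨Finset.subset_compl_iff_disjoint_right.mpr hBS.symm,
    disjoint_compl_left_iff.mpr hTB⟩

theorem exists_stable_partition_of_stable_seeds (hsymm : ∀ x y, w x y = w y x)
    (hnonneg : ∀ x y, 0 ≤ w x y) (hloop : ∀ x, w x x = 0) {a b : V → ℝ}
    (hdeg : ∀ x, a x + b x ≤ deg w Finset.univ x) {S T : Finset V} (hST : Disjoint S T)
    (hS : IsStable w a S) (hT : IsStable w b T) :
    ∃ A : Finset V, S ⊆ A ∧ T ⊆ Aᶜ ∧ IsStable w a A ∧ IsStable w b Aᶜ := by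
  let admissible : Set (Finset V) := {B | S ⊆ B ∧ Disjoint B T}
  obtain ⟨A, ⟨hSA, hAT⟩, hA⟩ :
      ∃ A ∈ admissible, IsMinOn (partitionCost w a b) admissible A :=
    admissible.exists_min_image (partitionCost w a b) admissible.toFinite ⟨S, subset_rfl, hST⟩
  have hTA : T ⊆ Aᶜ := Finset.subset_compl_iff_disjoint_left.mpr hAT
  refine ⟨A, hSA, hTA, hA.isStable_partitionCost hsymm hnonneg hloop hdeg hS hSA hAT, ?_⟩
  exact (hA.partitionCost_compl hsymm).isStable_partitionCost hsymm hnonneg hloop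
    (fun x => (add_comm _ _).trans_le (hdeg x)) hT hTA
    (disjoint_compl_left_iff.mpr hSA)

end Potential

section Seeds

variable {V : Type*} [Fintype V] [DecidableEq V] [Nontrivial V] {w : V → V → ℝ}

lemma le_maxW {x y : V} (h : y ≠ x) : w x y ≤ maxW w x :=
  Finset.le_sup' (w x) (Finset.mem_erase.mpr ⟨h, Finset.mem_univ y⟩)

lemma maxW_nonneg (hnonneg : ∀ x y, 0 ≤ w x y) (x : V) : 0 ≤ maxW w x :=
  let ⟨_, hy⟩ := exists_ne x
  (hnonneg x _).trans (le_maxW hy)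

variable (w) in
def IsStrong (f : V → ℝ) (X : Finset V) : Prop :=
  ∀ x ∈ X, f x + maxW w x ≤ deg w X x

lemma not_meager_iff {f : V → ℝ} {X : Finset V} :
    ¬ Meager w f X ↔ ∃ H ⊆ X, H.Nonempty ∧ IsStrong w f H := by
  simp only [Meager, IsStrong, not_forall, not_exists, not_and, not_lt, exists_prop]

lemma IsStrong.isStable (hnonneg : ∀ x y, 0 ≤ w x y) {f : V → ℝ} {X : Finset V}
    (hX : IsStrong w f X) : IsStable w f X :=
  fun x hx => (le_add_of_nonneg_right (maxW_nonneg hnonneg x)).trans (hX x hx)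

lemma IsStrong.isStable_erase {f : V → ℝ} {X : Finset V} (hX : IsStrong w f X) {v : V}
    (hv : v ∈ X) : IsStable w f (X.erase v) := by
  intro x hx
  obtain ⟨hxv, hxX⟩ := Finset.mem_erase.mp hx
  linarith [hX x hxX, deg_erase w hv x, le_maxW (w := w) (Ne.symm hxv)]

theorem exists_stable_seeds (hnonneg : ∀ x y, 0 ≤ w x y) {a b : V → ℝ}
    (ha : ∀ x, a x + maxW w x ≤ deg w Finset.univ x)
    (hb : ∀ x, b x + maxW w x ≤ deg w Finset.univ x)
    (hnomeager :
      ∀ A : Finset V, A.Nonempty → Aᶜ.Nonempty → Meager w a A → ¬ Meager w b Aᶜ) :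
    ∃ S T : Finset V, S.Nonempty ∧ T.Nonempty ∧ Disjoint S T ∧
      IsStable w a S ∧ IsStable w b T := by
  obtain ⟨S, -, ⟨hSne, hS⟩, hSmin⟩ := exists_minimal_le_of_wellFoundedLT
    (fun X : Finset V => X.Nonempty ∧ IsStrong w a X) Finset.univ
    ⟨Finset.univ_nonempty, fun x _ => ha x⟩
  obtain ⟨s, hs⟩ := hSne
  rcases (S.erase s).eq_empty_or_nonempty with hS₀ | hS₀
  · have hSs : S = {s} :=
      (Finset.erase_eq_empty_iff S s).mp hS₀ |>.resolve_left (Finset.ne_empty_of_mem hs)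
    refine ⟨S, Finset.univ.erase s, ⟨s, hs⟩, ?_, ?_, hS.isStable hnonneg,
      IsStrong.isStable_erase (fun x _ => hb x) (Finset.mem_univ s)⟩
    · obtain ⟨t, ht⟩ := exists_ne s
      exact ⟨t, Finset.mem_erase.mpr ⟨ht, Finset.mem_univ t⟩⟩
    · simp [hSs]
  · have hmeager : Meager w a (S.erase s) := by
      by_contra h
      obtain ⟨H, hHS, hHne, hH⟩ := not_meager_iff.mp h
      exact Finset.notMem_erase s S (hHS (hSmin ⟨hHne, hH⟩ (hHS.trans (S.erase_subset s)) hs))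
    obtain ⟨T, hTS, hTne, hT⟩ := not_meager_iff.mp
      (hnomeager _ hS₀ ⟨s, by simp⟩ hmeager)
    exact ⟨S.erase s, T, hS₀, hTne, Finset.disjoint_of_subset_right hTS disjoint_compl_right,
      hS.isStable_erase hs, hT.isStable hnonneg⟩

end Seeds

/-- The first case of the proof of Theorem 1: if there is no meager partition
of `V(G)`, then there exists a stable partition of `V(G)`. -/
theorem no_meager_partition_to_stable_partition
    {V : Type*} [Fintype V] [DecidableEq V] [Nontrivial V]
    (w : V → V → ℝ)
    (hsymm : ∀ x y, w x y = w y x)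
    (hnonneg : ∀ x y, 0 ≤ w x y)
    (hloop : ∀ x, w x x = 0)
    (a b : V → ℝ)
    (ha : ∀ x, 0 ≤ a x) (hb : ∀ x, 0 ≤ b x)
    (hdeg : ∀ x, a x + b x + 2 * maxW w x ≤ deg w Finset.univ x)
    (hnomeager : ¬ ∃ A B : Finset V, A.Nonempty ∧ B.Nonempty ∧ Disjoint A B ∧
      A ∪ B = Finset.univ ∧ Meager w a A ∧ Meager w b B) :
    ∃ A' B' : Finset V, A'.Nonempty ∧ B'.Nonempty ∧ Disjoint A' B' ∧
      A' ∪ B' = Finset.univ ∧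
      (∀ x ∈ A', a x ≤ deg w A' x) ∧ (∀ x ∈ B', b x ≤ deg w B' x) := by
  have hW := maxW_nonneg hnonneg
  obtain ⟨S, T, hS, hT, hST, hSa, hTb⟩ := exists_stable_seeds hnonneg
    (fun x => by linarith [hdeg x, hb x, hW x]) (fun x => by linarith [hdeg x, ha x, hW x])
    fun A hA hAc hAa hAb =>
      hnomeager ⟨A, Aᶜ, hA, hAc, disjoint_compl_right, Finset.union_compl A, hAa, hAb⟩
  obtain ⟨A, hSA, hTA, hAa, hAb⟩ := exists_stable_partition_of_stable_seeds hsymm hnonneg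
    hloop (fun x => by linarith [hdeg x, hW x]) hST hSa hTb
  exact ⟨A, Aᶜ, hS.mono hSA, hT.mono hTA, disjoint_compl_right, Finset.union_compl A,
    hAa, hAb⟩
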